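/- arXiv:2103.13983 — 4 statements merged into one kernel-verified Lean document; each statement's English description precedes it below -/
import Mathlib

section
/- If a group element g acting by isometries on a metric space satisfies that g^m preserves a bi-infinite geodesic by translation for some positive integer m ≤ κ, then the asymptotic translation length of g is a rational number expressible as a fraction with denominator at most κ. -/
open Filter Topology

/-- If `g` acts by isometries on a metric space and `g ^ m` translates a bi-infinite geodesic by a
nonzero integer `k`, for some positive integer `m ≤ κ`, then the asymptotic translation length of
`g` is a rational number expressible with denominator at most `κ`. -/
theorem stmt3 {G X : Type*} [Group G] [MetricSpace X] [MulAction G X]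
    (hiso : ∀ (g : G) (x y : X), dist (g • x) (g • y) = dist x y)
    (τ : G → ℝ)
    (hτ : ∀ (g : G) (x : X),
      Tendsto (fun n : ℕ => dist x (g ^ n • x) / (n : ℝ)) atTop (𝓝 (τ g)))
    (g : G) (κ m : ℕ) (hm : 0 < m) (hmκ : m ≤ κ)
    (L : ℤ → X) (hL : ∀ i j : ℤ, dist (L i) (L j) = |(i : ℝ) - (j : ℝ)|)
    (k : ℤ) (hk : k ≠ 0) (htr : ∀ i : ℤ, (g ^ m) • L i = L (i + k)) :
    ∃ q : ℚ, τ g = (q : ℝ) ∧ q.den ≤ κ := by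
  -- orbit of L 0 under powers of g^m
  have key : ∀ t : ℕ, (g ^ m) ^ t • L 0 = L (t * k) := by
    intro t
    induction t with
    | zero => simp
    | succ t ih =>
      rw [pow_succ' (g ^ m) t, mul_smul, ih, htr]
      congr 1
      push_cast
      ring
  -- the distance sequence for g^m at L 0 is eventually |k|
  have hEv : ∀ᶠ t : ℕ in atTop,
      dist (L 0) ((g ^ m) ^ t • L 0) / (t : ℝ) = |(k : ℝ)| := by
    filter_upwards [eventually_ge_atTop 1] with t ht
    have ht' : (0 : ℝ) < t := by exact_mod_cast ht
    rw [key t, hL]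
    push_cast
    rw [zero_sub, abs_neg, abs_mul, abs_of_nonneg (le_of_lt ht')]
    field_simp
  have h1 : Tendsto (fun t : ℕ => dist (L 0) ((g ^ m) ^ t • L 0) / (t : ℝ))
      atTop (𝓝 (τ (g ^ m))) := hτ (g ^ m) (L 0)
  have hτm : τ (g ^ m) = |(k : ℝ)| := by
    have h2 : Tendsto (fun t : ℕ => dist (L 0) ((g ^ m) ^ t • L 0) / (t : ℝ))
        atTop (𝓝 (|(k : ℝ)|)) := by
      rw [tendsto_congr' hEv]; exact tendsto_const_nhds
    exact tendsto_nhds_unique h1 h2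
  -- τ (g ^ m) = m * τ g
  have hmul : τ (g ^ m) = m * τ g := by
    have h3 : Tendsto (fun t : ℕ => dist (L 0) (g ^ (m * t) • L 0) / ((m * t : ℕ) : ℝ))
        atTop (𝓝 (τ g)) :=
      (hτ g (L 0)).comp (tendsto_atTop_atTop_of_monotone
        (fun a b hab => Nat.mul_le_mul_left m hab)
        (fun n => ⟨n, Nat.le_mul_of_pos_left n hm⟩))
    have h4 : Tendsto (fun t : ℕ => (m : ℝ) * (dist (L 0) (g ^ (m * t) • L 0) / ((m * t : ℕ) : ℝ)))
        atTop (𝓝 ((m : ℝ) * τ g)) := h3.const_mul _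
    have hEq : ∀ᶠ t : ℕ in atTop,
        (m : ℝ) * (dist (L 0) (g ^ (m * t) • L 0) / ((m * t : ℕ) : ℝ))
          = dist (L 0) ((g ^ m) ^ t • L 0) / (t : ℝ) := by
      filter_upwards [eventually_ge_atTop 1] with t ht
      have ht' : (0 : ℝ) < t := by exact_mod_cast ht
      have hm' : (0 : ℝ) < m := by exact_mod_cast hm
      rw [← pow_mul]
      push_cast
      field_simp
    have h5 : Tendsto (fun t : ℕ => dist (L 0) ((g ^ m) ^ t • L 0) / (t : ℝ))
        atTop (𝓝 ((m : ℝ) * τ g)) := by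
      rw [tendsto_congr' hEq] at h4; exact h4
    exact tendsto_nhds_unique h1 h5
  have hτg : τ g = |(k : ℝ)| / m := by
    have hm' : (0 : ℝ) < m := by exact_mod_cast hm
    field_simp
    rw [← hτm, hmul]; ring
  refine ⟨Rat.divInt |k| (m : ℤ), ?_, ?_⟩
  · rw [hτg, Rat.divInt_eq_div]
    push_cast
    ring
  · have hd : ((Rat.divInt |k| (m : ℤ)).den : ℤ) ∣ (m : ℤ) := Rat.den_dvd _ _
    have := Int.le_of_dvd (by exact_mod_cast hm) hd
    omega
end

section
/- In a right-angled Artin group A(Γ), for every element g, any two reduced words representing g have the same support (set of generators occurring in the word). -/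
/-- The commutation relations defining the right-angled Artin group of a graph `Γ`. -/
def raagRels {V : Type*} (Γ : SimpleGraph V) : Set (FreeGroup V) :=
  {w | ∃ u v : V, Γ.Adj u v ∧
    w = FreeGroup.of u * FreeGroup.of v * (FreeGroup.of u)⁻¹ * (FreeGroup.of v)⁻¹}

/-- The right-angled Artin group `A(Γ)` of a graph `Γ`. -/
abbrev Raag {V : Type*} (Γ : SimpleGraph V) := PresentedGroup (raagRels Γ)

/-- The canonical projection from the free group to `A(Γ)`. -/
def raagProj {V : Type*} (Γ : SimpleGraph V) : FreeGroup V →* Raag Γ :=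
  PresentedGroup.mk (raagRels Γ)

/-- The support of a word: the set of generators appearing in it. -/
def wordSupp {V : Type*} (w : List (V × Bool)) : Set V := {v | ∃ b : Bool, (v, b) ∈ w}

/-- A word is reduced (for `A(Γ)`) if it has minimal length among all words representing the same
element of `A(Γ)`. -/
def IsReducedWord {V : Type*} (Γ : SimpleGraph V) (w : List (V × Bool)) : Prop :=
  ∀ w' : List (V × Bool),
    raagProj Γ (FreeGroup.mk w') = raagProj Γ (FreeGroup.mk w) → w.length ≤ w'.length

/-!
Killing the generators outside a set `S` of vertices maps every relator `[u, v]` of `A(Γ)` either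
to itself or to `1`, so it induces a retraction of `A(Γ)` which on words deletes the letters outside
`S`. If a reduced word `w₁` contained a letter outside the support of another word `w₂` for the same
element, applying this retraction with `S = supp w₂` would give a strictly shorter word for that
element.
-/

section Retraction

open Classical

variable {V : Type*}

noncomputable def freeRetraction (S : Set V) : FreeGroup V →* FreeGroup V :=
  FreeGroup.lift fun v => if v ∈ S then FreeGroup.of v else 1

lemma freeRetraction_mk (S : Set V) (w : List (V × Bool)) :
    freeRetraction S (FreeGroup.mk w) = FreeGroup.mk (w.filter fun p => p.1 ∈ S) := by
  induction w with
  | nil => rfl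
  | cons a w ih =>
    rw [← List.singleton_append, ← FreeGroup.mul_mk, map_mul, ih, List.filter_append,
      ← FreeGroup.mul_mk]
    congr 1
    obtain ⟨v, _ | _⟩ := a <;> by_cases hv : v ∈ S <;>
      simp [freeRetraction, hv, FreeGroup.lift_mk] <;> rfl

lemma raagProj_freeRetraction_congr (Γ : SimpleGraph V) (S : Set V)
    {x y : FreeGroup V} (h : raagProj Γ x = raagProj Γ y) :
    raagProj Γ (freeRetraction S x) = raagProj Γ (freeRetraction S y) := by
  have hrels : raagRels Γ ⊆ ((raagProj Γ).comp (freeRetraction S)).ker := by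
    rintro _ ⟨u, v, huv, rfl⟩
    rw [SetLike.mem_coe, MonoidHom.mem_ker]
    by_cases hS : u ∈ S ∧ v ∈ S
    · simp only [freeRetraction, MonoidHom.comp_apply, map_mul, map_inv, FreeGroup.lift_apply_of,
        if_pos hS.1, if_pos hS.2]
      exact PresentedGroup.one_of_mem ⟨u, v, huv, rfl⟩
    · rcases not_and_or.1 hS with hu | hv <;> simp [freeRetraction, *]
  have hker := Subgroup.normalClosure_le_normal hrels
  rw [← div_eq_one, ← map_div, ← map_div]
  have hxy : raagProj Γ (x / y) = 1 := by rw [map_div, h, div_self']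
  exact hker (PresentedGroup.mk_eq_one_iff.mp hxy)

lemma filter_mem_wordSupp (w : List (V × Bool)) :
    w.filter (fun p => p.1 ∈ wordSupp w) = w :=
  List.filter_eq_self.2 fun p hp => decide_eq_true ⟨p.2, hp⟩

lemma IsReducedWord.wordSupp_subset {Γ : SimpleGraph V} {w₁ w₂ : List (V × Bool)}
    (h₁ : IsReducedWord Γ w₁) (heq : raagProj Γ (FreeGroup.mk w₁) = raagProj Γ (FreeGroup.mk w₂)) :
    wordSupp w₁ ⊆ wordSupp w₂ := by
  rintro v ⟨b, hvb⟩
  by_contra hv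
  set S := wordSupp w₂
  have hsame : raagProj Γ (FreeGroup.mk (w₁.filter fun p => p.1 ∈ S)) =
      raagProj Γ (FreeGroup.mk w₁) := by
    rw [← freeRetraction_mk, raagProj_freeRetraction_congr Γ S heq, freeRetraction_mk,
      filter_mem_wordSupp, heq]
  have hshorter : (w₁.filter fun p => p.1 ∈ S).length < w₁.length :=
    List.length_filter_lt_length_iff_exists.2 ⟨(v, b), hvb, by simpa using hv⟩
  exact (h₁ _ hsame).not_gt hshorter

end Retraction

/-- In a right-angled Artin group, any two reduced words representing the same element have the
same support. -/
theorem stmt8 {V : Type*} (Γ : SimpleGraph V)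
    (w₁ w₂ : List (V × Bool)) (h₁ : IsReducedWord Γ w₁) (h₂ : IsReducedWord Γ w₂)
    (heq : raagProj Γ (FreeGroup.mk w₁) = raagProj Γ (FreeGroup.mk w₂)) :
    wordSupp w₁ = wordSupp w₂ :=
  (h₁.wordSupp_subset heq).antisymm (h₂.wordSupp_subset heq.symm)
end

section
/- Let Γ be a finite connected simple graph without a vertex adjacent to all other vertices (no central vertex). Then for each vertex v of Γ and each nonzero integer l, the intersection of Γ with its conjugate Γ^{v^l} inside the extension graph Γ^e equals the star of v in Γ. -/
/-- The generator of `A(Γ)` corresponding to a vertex `v`. -/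
def raagGen {V : Type*} (Γ : SimpleGraph V) (v : V) : Raag Γ := PresentedGroup.of v

/-- Powers of the translation-by-one permutation of `ℤ`. -/
lemma addRight_one_zpow (n : ℤ) :
    (Equiv.addRight (1 : ℤ)) ^ n = Equiv.addRight n := by
  have hinv : ((Equiv.addRight (1 : ℤ))⁻¹ : Equiv.Perm ℤ) = Equiv.addRight (-1) := by
    ext x
    have : Equiv.addRight (1 : ℤ) (x + (-1)) = x := by
      simp [Equiv.coe_addRight]
    rw [show ((Equiv.addRight (1 : ℤ))⁻¹ : Equiv.Perm ℤ) x
        = (Equiv.addRight (1 : ℤ)).symm x from rfl]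
    rw [Equiv.symm_apply_eq]
    simp [Equiv.coe_addRight]
  induction n using Int.induction_on with
  | zero => ext x; simp
  | succ k ih =>
      rw [zpow_add_one, ih]
      ext x
      simp only [Equiv.Perm.mul_apply, Equiv.coe_addRight]
      ring
  | pred k ih =>
      rw [zpow_sub_one, ih, hinv]
      ext x
      simp only [Equiv.Perm.mul_apply, Equiv.coe_addRight]
      ring

lemma addRight_one_zpow_apply (n x : ℤ) : ((Equiv.addRight (1 : ℤ)) ^ n) x = x + n := by
  rw [addRight_one_zpow]; rfl

/-- If two generators are adjacent, they commute in the RAAG. -/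
lemma raagGen_commute {V : Type*} (Γ : SimpleGraph V) {u w : V} (h : Γ.Adj u w) :
    Commute (raagGen Γ u) (raagGen Γ w) := by
  have hrel : (FreeGroup.of u * FreeGroup.of w * (FreeGroup.of u)⁻¹ * (FreeGroup.of w)⁻¹)
      ∈ raagRels Γ := ⟨u, w, h, rfl⟩
  have h1 : ((QuotientGroup.mk (FreeGroup.of u * FreeGroup.of w * (FreeGroup.of u)⁻¹ *
      (FreeGroup.of w)⁻¹) : Raag Γ)) = 1 := by
    apply (QuotientGroup.eq_one_iff _).mpr
    exact Subgroup.subset_normalClosure hrel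
  have h2 : raagGen Γ u * raagGen Γ w * (raagGen Γ u)⁻¹ * (raagGen Γ w)⁻¹ = 1 := by
    exact h1
  have h3 : raagGen Γ u * raagGen Γ w * (raagGen Γ u)⁻¹ = raagGen Γ w :=
    mul_inv_eq_one.mp h2
  exact mul_inv_eq_iff_eq_mul.mp h3

/-- Let `Γ` be a finite connected simple graph with no central vertex (no vertex adjacent to all
other vertices). Then for each vertex `v` and each nonzero integer `l`, the intersection of the
vertex set of `Γ ⊆ Γ^e` (the unconjugated generators) with that of its conjugate `Γ^{v^l}` equals
the closed star of `v` in `Γ`. -/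
theorem stmt11 {V : Type*} [Fintype V] (Γ : SimpleGraph V) (hconn : Γ.Connected)
    (hnc : ¬ ∃ v : V, ∀ u : V, u ≠ v → Γ.Adj u v)
    (v : V) (l : ℤ) (hl : l ≠ 0) :
    {a : Raag Γ | ∃ u : V, a = raagGen Γ u} ∩
        {a : Raag Γ | ∃ u : V,
          a = ((raagGen Γ v) ^ l)⁻¹ * raagGen Γ u * (raagGen Γ v) ^ l} =
      {a : Raag Γ | ∃ u : V, (u = v ∨ Γ.Adj u v) ∧ a = raagGen Γ u} := by
  classical
  ext a
  constructor
  · rintro ⟨⟨u, rfl⟩, ⟨w, hw⟩⟩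
    refine ⟨u, ?_, rfl⟩
    by_contra hbad
    push_neg at hbad
    obtain ⟨huv, hadj⟩ := hbad
    -- build a homomorphism to Perm ℤ sending u to swap 0 1, v to translation, rest to 1
    set f : V → Equiv.Perm ℤ := fun x =>
      if x = u then Equiv.swap 0 1 else if x = v then Equiv.addRight 1 else 1 with hf
    have hcond : ∀ r ∈ raagRels Γ, FreeGroup.lift f r = 1 := by
      rintro r ⟨a, b, hab, rfl⟩
      have hcomm : Commute (f a) (f b) := by
        by_cases ha : a = u
        · by_cases hb : b = v
          · exact absurd (ha ▸ hb ▸ hab) (fun h => hadj h)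
          · by_cases hb' : b = u
            · simp [hf, ha, hb']
            · simp [hf, ha, hb, hb', Commute.one_right]
        · by_cases ha' : a = v
          · by_cases hb : b = u
            · exact absurd (ha' ▸ hb ▸ hab) (fun h => hadj h.symm)
            · by_cases hb' : b = v
              · simp [hf, ha', hb, hb']
              · simp [hf, ha, ha', hb, hb', Commute.one_right]
          · simp [hf, ha, ha', Commute.one_left]
      simp only [map_mul, map_inv, FreeGroup.lift_apply_of]
      rw [hcomm.eq, mul_inv_cancel_right, mul_inv_cancel]
    set φ : Raag Γ →* Equiv.Perm ℤ := PresentedGroup.toGroup hcond with hφ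
    have hφof : ∀ x : V, φ (raagGen Γ x) = f x := fun x => PresentedGroup.toGroup.of hcond
    have heq := congrArg φ hw
    simp only [map_mul, map_inv, map_zpow, hφof] at heq
    have hfu : f u = Equiv.swap 0 1 := by simp [hf]
    have hfv : f v = Equiv.addRight 1 := by simp [hf, Ne.symm huv]
    rw [hfu, hfv] at heq
    -- evaluate
    have hpow : ∀ x : ℤ, ((Equiv.addRight (1 : ℤ)) ^ l) x = x + l :=
      addRight_one_zpow_apply l
    have hpowinv : ∀ x : ℤ, (((Equiv.addRight (1 : ℤ)) ^ l)⁻¹) x = x - l := by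
      intro x
      have : ((Equiv.addRight (1 : ℤ)) ^ l)⁻¹ = (Equiv.addRight (1 : ℤ)) ^ (-l) := by
        rw [zpow_neg]
      rw [this, addRight_one_zpow_apply]
      ring
    by_cases hwu : w = u
    · -- swap 0 1 = t^{-l} (swap 0 1) t^l : evaluate at 0
      rw [hwu, hfu] at heq
      have h0 := Equiv.ext_iff.mp heq 0
      simp only [Equiv.Perm.mul_apply] at h0
      rw [hpow 0, zero_add, Equiv.swap_apply_left, hpowinv] at h0
      by_cases hl1 : l = 1
      · rw [hl1, Equiv.swap_apply_right] at h0
        omega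
      · rw [Equiv.swap_apply_of_ne_of_ne hl hl1] at h0
        omega
    · by_cases hwv : w = v
      · -- swap 0 1 = t : evaluate at 2
        rw [hwv, hfv] at heq
        have heq2 : Equiv.swap (0:ℤ) 1 = Equiv.addRight 1 := by
          have : ((Equiv.addRight (1:ℤ)) ^ l)⁻¹ * Equiv.addRight 1 * (Equiv.addRight (1:ℤ)) ^ l
              = Equiv.addRight 1 := by
            have hc : Commute ((Equiv.addRight (1:ℤ)) ^ l) (Equiv.addRight (1:ℤ)) :=
              (Commute.refl (Equiv.addRight (1:ℤ))).zpow_left l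
            rw [mul_assoc, ← hc.eq, ← mul_assoc, inv_mul_cancel, one_mul]
          rw [heq, this]
        have h2 := Equiv.ext_iff.mp heq2 2
        rw [Equiv.swap_apply_of_ne_of_ne (by norm_num) (by norm_num)] at h2
        simp [Equiv.coe_addRight] at h2
      · -- f w = 1
        have hfw : f w = 1 := by simp [hf, hwu, hwv]
        rw [hfw] at heq
        simp only [mul_one] at heq
        rw [inv_mul_cancel] at heq
        have h0 := Equiv.ext_iff.mp heq 0
        rw [Equiv.swap_apply_left] at h0
        simp at h0
  · rintro ⟨u, hu, rfl⟩
    refine ⟨⟨u, rfl⟩, ⟨u, ?_⟩⟩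
    have hcomm : Commute (raagGen Γ u) ((raagGen Γ v) ^ l) := by
      rcases hu with rfl | hadj
      · exact (Commute.refl _).zpow_right l
      · exact (raagGen_commute Γ hadj).zpow_right l
    rw [mul_assoc, hcomm.eq, ← mul_assoc, inv_mul_cancel, one_mul]
end

section
/- Let g = s_n⋯s_1 = s_{σ(n)}⋯s_{σ(1)} be two syllable decompositions of an element g of a right-angled Artin group related by successive transpositions of adjacent commuting syllables, with s_i a power of the vertex v_i. Define z_i := (s_i⋯s_1)^{-1} v_i (s_i⋯s_1). Then for every i, z_{σ(i)} = (s_{σ(i)}⋯s_{σ(1)})^{-1} v_{σ(i)} (s_{σ(i)}⋯s_{σ(1)}). -/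
/-- One elementary move on arrangements of the syllables `s`: transposing two adjacent positions
whose syllables commute. The arrangement `σ` represents the word `s (σ (n-1)) ⋯ s (σ 0)`. -/
def swapStep {n : ℕ} {A : Type*} [Group A] (s : Fin n → A)
    (σ σ' : Equiv.Perm (Fin n)) : Prop :=
  ∃ p q : Fin n, (p : ℕ) + 1 = (q : ℕ) ∧ Commute (s (σ p)) (s (σ q)) ∧
    σ' = σ * Equiv.swap p q

/-- The partial product `t i * t (i-1) * ⋯ * t 0` of the word `t (n-1) ⋯ t 0`. -/
def pprod {n : ℕ} {A : Type*} [Monoid A] (t : Fin n → A) (i : Fin n) : A :=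
  (((List.ofFn t).take ((i : ℕ) + 1)).reverse).prod

open Matrix

abbrev M2 := Matrix (Fin 2) (Fin 2) ℤ

def XU : M2ˣ := ⟨!![1,1;0,1], !![1,-1;0,1], by simp [Matrix.mul_fin_two, Matrix.one_fin_two], by simp [Matrix.mul_fin_two, Matrix.one_fin_two]⟩
def YU : M2ˣ := ⟨!![1,0;1,1], !![1,0;-1,1], by simp [Matrix.mul_fin_two, Matrix.one_fin_two], by simp [Matrix.mul_fin_two, Matrix.one_fin_two]⟩

lemma XU_zpow (a : ℤ) : ((XU ^ a : M2ˣ) : M2) = !![1, a; 0, 1] := by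
  induction a using Int.induction_on with
  | zero => simp [Matrix.one_fin_two]
  | succ i ih =>
      rw [_root_.zpow_add_one, Units.val_mul, ih]
      show _ * XU.val = _
      rw [show XU.val = !![1,1;0,1] from rfl, Matrix.mul_fin_two]
      norm_num [add_comm]
  | pred i ih =>
      rw [_root_.zpow_sub_one, Units.val_mul, ih]
      show _ * XU.inv = _
      rw [show XU.inv = !![1,-1;0,1] from rfl, Matrix.mul_fin_two]
      norm_num [sub_eq_add_neg, add_comm]

lemma YU_zpow (b : ℤ) : ((YU ^ b : M2ˣ) : M2) = !![1, 0; b, 1] := by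
  induction b using Int.induction_on with
  | zero => simp [Matrix.one_fin_two]
  | succ i ih =>
      rw [_root_.zpow_add_one, Units.val_mul, ih]
      show _ * YU.val = _
      rw [show YU.val = !![1,0;1,1] from rfl, Matrix.mul_fin_two]
      norm_num [add_comm]
  | pred i ih =>
      rw [_root_.zpow_sub_one, Units.val_mul, ih]
      show _ * YU.inv = _
      rw [show YU.inv = !![1,0;-1,1] from rfl, Matrix.mul_fin_two]
      norm_num [sub_eq_add_neg, add_comm]

lemma not_commute_XY {a b : ℤ} (ha : a ≠ 0) (hb : b ≠ 0) : ¬ Commute (XU ^ a) (YU ^ b) := by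
  intro h
  have h2 := congrArg Units.val h.eq
  rw [Units.val_mul, Units.val_mul, XU_zpow, YU_zpow, Matrix.mul_fin_two,
    Matrix.mul_fin_two] at h2
  have h00 := congrFun (congrFun h2 0) 0
  simp at h00
  rcases h00 with h' | h'
  exacts [ha h', hb h']

lemma adj_commute {V : Type*} (Γ : SimpleGraph V) {u w : V} (hadj : Γ.Adj u w) :
    Commute (raagGen Γ u) (raagGen Γ w) := by
  rw [← commutatorElement_eq_one_iff_commute]
  have hr : (FreeGroup.of u * FreeGroup.of w * (FreeGroup.of u)⁻¹ * (FreeGroup.of w)⁻¹)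
      ∈ raagRels Γ := ⟨u, w, hadj, rfl⟩
  have h1 : PresentedGroup.mk (raagRels Γ)
      (FreeGroup.of u * FreeGroup.of w * (FreeGroup.of u)⁻¹ * (FreeGroup.of w)⁻¹) = 1 := by
    have := Subgroup.subset_normalClosure hr
    exact (QuotientGroup.eq_one_iff _).mpr this
  simpa [commutatorElement_def, raagGen, PresentedGroup.of, _root_.map_mul, _root_.map_inv] using h1

lemma raag_root_commute {V : Type*} (Γ : SimpleGraph V) {u w : V} {a b : ℤ}
    (ha : a ≠ 0) (hb : b ≠ 0)
    (h : Commute ((raagGen Γ u) ^ a) ((raagGen Γ w) ^ b)) :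
    Commute (raagGen Γ u) (raagGen Γ w) := by
  classical
  by_cases huw : u = w
  · subst huw; exact Commute.refl _
  by_cases hadj : Γ.Adj u w
  · exact adj_commute Γ hadj
  exfalso
  set f : V → M2ˣ := fun x => if x = u then XU else if x = w then YU else 1 with hf
  have hc : ∀ x y : V, Γ.Adj x y → Commute (f x) (f y) := by
    intro x y hxy
    simp only [hf]
    by_cases hx : x = u
    · by_cases hy : y = u
      · simp [hx, hy]
      by_cases hy' : y = w
      · exact absurd (hx ▸ hy' ▸ hxy) hadj
      · simp [hx, hy, hy', Commute.one_right]
    · by_cases hx' : x = w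
      · by_cases hy : y = u
        · exact absurd (hx' ▸ hy ▸ hxy).symm hadj
        by_cases hy' : y = w
        · simp [hx, hx', hy, hy']
        · simp [hx, hx', hy, hy', Commute.one_right]
      · simp [hx, hx', Commute.one_left]
  have hrel : ∀ r ∈ raagRels Γ, FreeGroup.lift f r = 1 := by
    rintro r ⟨x, y, hxy, rfl⟩
    have := (hc x y hxy).eq
    simp only [_root_.map_mul, _root_.map_inv, FreeGroup.lift_apply_of]
    rw [this]
    group
  let φ := PresentedGroup.toGroup hrel
  have hu : φ (raagGen Γ u) = XU := by
    show φ (PresentedGroup.of u) = XU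
    rw [PresentedGroup.toGroup.of]
    simp [hf]
  have hw : φ (raagGen Γ w) = YU := by
    show φ (PresentedGroup.of w) = YU
    rw [PresentedGroup.toGroup.of]
    simp [hf, huw, Ne.symm huw]
  have h2 := h.map φ
  rw [map_zpow, map_zpow, hu, hw] at h2
  exact not_commute_XY ha hb h2

def Q {n : ℕ} {A : Type*} [Monoid A] (t : Fin n → A) (m : ℕ) : A :=
  (((List.ofFn t).take m).reverse).prod

lemma pprod_eq_Q {n : ℕ} {A : Type*} [Monoid A] (t : Fin n → A) (i : Fin n) :
    pprod t i = Q t ((i : ℕ) + 1) := rfl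

lemma Q_succ {n : ℕ} {A : Type*} [Monoid A] (t : Fin n → A) (m : ℕ) (h : m < n) :
    Q t (m + 1) = t ⟨m, h⟩ * Q t m := by
  unfold Q
  rw [List.take_succ]
  have hg : (List.ofFn t)[m]? = some (t ⟨m, h⟩) := by
    rw [List.getElem?_eq_getElem (by simpa using h)]
    simp
  rw [hg]
  simp

lemma Q_succ_ge {n : ℕ} {A : Type*} [Monoid A] (t : Fin n → A) (m : ℕ) (h : n ≤ m) :
    Q t (m + 1) = Q t m := by
  unfold Q
  rw [List.take_of_length_le (by simpa using h.trans (Nat.le_succ m)), List.take_of_length_le (by simpa using h)]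

lemma conj_cancel {A : Type*} [Group A] {v a : A} (h : Commute v a) (B : A) :
    (a * B)⁻¹ * v * (a * B) = B⁻¹ * v * B := by
  have ha : a⁻¹ * v * a = v := by
    rw [mul_assoc, h.eq, ← mul_assoc, inv_mul_cancel, one_mul]
  calc (a * B)⁻¹ * v * (a * B) = B⁻¹ * (a⁻¹ * v * a) * B := by group
  _ = B⁻¹ * v * B := by rw [ha]

/-- Let `g = s_n ⋯ s_1 = s_{σ(n)} ⋯ s_{σ(1)}` be two syllable decompositions related by successive
transpositions of adjacent commuting syllables, where `s i = (v i) ^ (k i)`. With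
`z i := (s_i ⋯ s_1)⁻¹ (v i) (s_i ⋯ s_1)`, one has
`z (σ i) = (s_{σ(i)} ⋯ s_{σ(1)})⁻¹ (v (σ i)) (s_{σ(i)} ⋯ s_{σ(1)})` for every `i`. -/
theorem stmt13 {V : Type*} (Γ : SimpleGraph V) (g : Raag Γ) (n : ℕ)
    (s : Fin n → Raag Γ) (vtx : Fin n → V) (k : Fin n → ℤ)
    (hk : ∀ i, k i ≠ 0) (hs : ∀ i, s i = (raagGen Γ (vtx i)) ^ (k i))
    (hprod : (List.ofFn s).reverse.prod = g)
    (σ : Equiv.Perm (Fin n))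
    (hσ : Relation.ReflTransGen (swapStep s) 1 σ)
    (hprod' : (List.ofFn (s ∘ σ)).reverse.prod = g) :
    ∀ i : Fin n,
      (pprod s (σ i))⁻¹ * raagGen Γ (vtx (σ i)) * pprod s (σ i) =
        (pprod (s ∘ σ) i)⁻¹ * raagGen Γ (vtx (σ i)) * pprod (s ∘ σ) i := by
  clear hprod hprod' g
  induction hσ with
  | refl =>
      intro i
      have h1 : s ∘ ⇑(1 : Equiv.Perm (Fin n)) = s := by funext j; simp
      rw [h1]
      simp
  | @tail τ σ' _ hstep ih =>
      obtain ⟨p, q, hpq, hcomm, rfl⟩ := hstep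
      -- basic commutation facts
      have hcvv : Commute (raagGen Γ (vtx (τ p))) (raagGen Γ (vtx (τ q))) := by
        refine raag_root_commute Γ (hk (τ p)) (hk (τ q)) ?_
        rw [← hs, ← hs]; exact hcomm
      have hc1 : Commute (raagGen Γ (vtx (τ p))) (s (τ q)) := by
        rw [hs]; exact hcvv.zpow_right _
      have hc2 : Commute (raagGen Γ (vtx (τ q))) (s (τ p)) := by
        rw [hs]; exact hcvv.symm.zpow_right _
      have hc3 : Commute (raagGen Γ (vtx (τ q))) (s (τ q)) := by
        rw [hs]; exact (Commute.refl _).zpow_right _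
      have hpltq : (p : ℕ) < (q : ℕ) := by omega
      -- entrywise description of the new word
      have hep : (s ∘ ⇑(τ * Equiv.swap p q)) p = s (τ q) := by
        simp [Equiv.Perm.mul_apply]
      have heq : (s ∘ ⇑(τ * Equiv.swap p q)) q = s (τ p) := by
        simp [Equiv.Perm.mul_apply]
      have hee : ∀ j : Fin n, j ≠ p → j ≠ q → (s ∘ ⇑(τ * Equiv.swap p q)) j = (s ∘ ⇑τ) j := by
        intro j h1 h2
        simp [Equiv.Perm.mul_apply, Equiv.swap_apply_of_ne_of_ne h1 h2]
      -- partial products agree away from the swapped pair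
      have hQ : ∀ m : ℕ, (m ≤ (p : ℕ) ∨ (q : ℕ) < m) →
          Q (s ∘ ⇑(τ * Equiv.swap p q)) m = Q (s ∘ ⇑τ) m := by
        intro m
        induction m using Nat.strong_induction_on with
        | _ m IH =>
          intro hm
          match m, hm with
          | 0, _ => rfl
          | (m + 1), hm =>
            have hmn : m < n ∨ n ≤ m := lt_or_ge m n
            rcases hmn with hmn | hmn
            · rcases hm with hm | hm
              · -- m + 1 ≤ p
                have h1 : (⟨m, hmn⟩ : Fin n) ≠ p := by
                  intro h; rw [Fin.ext_iff] at h; simp only [] at h; omega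
                have h2 : (⟨m, hmn⟩ : Fin n) ≠ q := by
                  intro h; rw [Fin.ext_iff] at h; simp only [] at h; omega
                rw [Q_succ _ m hmn, Q_succ _ m hmn, hee _ h1 h2, IH m (by omega) (by omega)]
              · -- q < m + 1, so q ≤ m
                rcases Nat.lt_or_ge (q : ℕ) m with hqm | hqm
                · have h1 : (⟨m, hmn⟩ : Fin n) ≠ p := by
                    intro h; rw [Fin.ext_iff] at h; simp only [] at h; omega
                  have h2 : (⟨m, hmn⟩ : Fin n) ≠ q := by
                    intro h; rw [Fin.ext_iff] at h; simp only [] at h; omega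
                  rw [Q_succ _ m hmn, Q_succ _ m hmn, hee _ h1 h2, IH m (by omega) (by omega)]
                · -- m = q
                  have hmq : m = (q : ℕ) := by omega
                  have e1 : (⟨m, hmn⟩ : Fin n) = q := Fin.ext hmq
                  have hpn : (p : ℕ) < n := p.isLt
                  have e2 : (⟨(p : ℕ), hpn⟩ : Fin n) = p := Fin.ext rfl
                  have hm' : m = (p : ℕ) + 1 := by omega
                  have hQp : Q (s ∘ ⇑(τ * Equiv.swap p q)) ((p : ℕ))
                      = Q (s ∘ ⇑τ) ((p : ℕ)) := IH (p : ℕ) (by omega) (Or.inl le_rfl)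
                  rw [Q_succ _ m hmn, Q_succ _ m hmn, e1, heq]
                  rw [show Q (s ∘ ⇑(τ * Equiv.swap p q)) m
                      = Q (s ∘ ⇑(τ * Equiv.swap p q)) ((p : ℕ) + 1) from by rw [hm'],
                    show Q (s ∘ ⇑τ) m = Q (s ∘ ⇑τ) ((p : ℕ) + 1) from by rw [hm'],
                    Q_succ _ _ hpn, Q_succ _ _ hpn, e2, hep, hQp]
                  show s (τ p) * (s (τ q) * _) = s (τ q) * ((s ∘ ⇑τ) p * _)
                  rw [show (s ∘ ⇑τ) p = s (τ p) from rfl, ← mul_assoc, ← mul_assoc, hcomm.eq]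
            · rw [Q_succ_ge _ m hmn, Q_succ_ge _ m hmn, IH m (by omega) (by omega)]
      have e2 : (⟨(p : ℕ), p.isLt⟩ : Fin n) = p := Fin.ext rfl
      have e3 : (⟨(q : ℕ), q.isLt⟩ : Fin n) = q := Fin.ext rfl
      have hBp : pprod (s ∘ ⇑τ) p = s (τ p) * Q (s ∘ ⇑τ) (p : ℕ) := by
        rw [pprod_eq_Q, Q_succ _ _ p.isLt, e2]; rfl
      have hBq : pprod (s ∘ ⇑τ) q = s (τ q) * (s (τ p) * Q (s ∘ ⇑τ) (p : ℕ)) := by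
        rw [pprod_eq_Q, Q_succ _ _ q.isLt, e3,
          show (q : ℕ) = (p : ℕ) + 1 from hpq.symm, Q_succ _ _ p.isLt, e2]; rfl
      intro i
      rcases Nat.lt_trichotomy (i : ℕ) (p : ℕ) with hip | hip | hip
      · -- i < p
        have h1 : i ≠ p := by intro h; rw [Fin.ext_iff] at h; omega
        have h2 : i ≠ q := by intro h; rw [Fin.ext_iff] at h; omega
        have hσi : (τ * Equiv.swap p q) i = τ i := by
          rw [Equiv.Perm.mul_apply, Equiv.swap_apply_of_ne_of_ne h1 h2]
        have hw : pprod (s ∘ ⇑(τ * Equiv.swap p q)) i = pprod (s ∘ ⇑τ) i := by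
          rw [pprod_eq_Q, pprod_eq_Q]; exact hQ _ (Or.inl (by omega))
        rw [hσi, hw]; exact ih i
      · -- i = p
        have hiP : i = p := Fin.ext hip
        rw [hiP]
        have hσp : (τ * Equiv.swap p q) p = τ q := by
          rw [Equiv.Perm.mul_apply, Equiv.swap_apply_left]
        have hwr : pprod (s ∘ ⇑(τ * Equiv.swap p q)) p = s (τ q) * Q (s ∘ ⇑τ) (p : ℕ) := by
          rw [pprod_eq_Q, Q_succ _ _ p.isLt, e2, hep, hQ _ (Or.inl le_rfl)]
        have hih := ih q
        rw [hBq] at hih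
        rw [hσp, hih, hwr, conj_cancel hc3, conj_cancel hc2, conj_cancel hc3]
      · -- p < i
        rcases Nat.lt_or_ge (q : ℕ) (i : ℕ) with hqi | hqi
        · -- q < i
          have h1 : i ≠ p := by intro h; rw [Fin.ext_iff] at h; omega
          have h2 : i ≠ q := by intro h; rw [Fin.ext_iff] at h; omega
          have hσi : (τ * Equiv.swap p q) i = τ i := by
            rw [Equiv.Perm.mul_apply, Equiv.swap_apply_of_ne_of_ne h1 h2]
          have hw : pprod (s ∘ ⇑(τ * Equiv.swap p q)) i = pprod (s ∘ ⇑τ) i := by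
            rw [pprod_eq_Q, pprod_eq_Q]; exact hQ _ (Or.inr (by omega))
          rw [hσi, hw]; exact ih i
        · -- i = q
          have hiq : (i : ℕ) = (q : ℕ) := by omega
          have hiQ : i = q := Fin.ext hiq
          rw [hiQ]
          have hσq : (τ * Equiv.swap p q) q = τ p := by
            rw [Equiv.Perm.mul_apply, Equiv.swap_apply_right]
          have hw : pprod (s ∘ ⇑(τ * Equiv.swap p q)) q = pprod (s ∘ ⇑τ) q := by
            rw [pprod_eq_Q, pprod_eq_Q]; exact hQ _ (Or.inr (by omega))
          have hih := ih p
          rw [hBp] at hih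
          rw [hσq, hih, hw, hBq, conj_cancel hc1]
end
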